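/- arXiv:2006.03551 — 2 statements merged into one kernel-verified Lean document; each statement's English description precedes it below -/
import Mathlib

section
/- Let P be a reduced Poisson algebra over a field 𝔽 of characteristic not equal to 2 (P has no nonzero nilpotent elements). Then P is solvable as a Lie algebra if and only if P is abelian, i.e. {P,P} = 0. -/
/-- A Poisson bracket on a commutative associative unital `F`-algebra `P`:
an `F`-bilinear, alternating bracket satisfying the Jacobi identity and the
Leibniz rule `{a·b, c} = a·{b,c} + b·{a,c}`. -/
structure PoissonBracket (F P : Type*) [Field F] [CommRing P] [Algebra F P] where
  bracket : P → P → P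
  add_left : ∀ a b c : P, bracket (a + b) c = bracket a c + bracket b c
  smul_left : ∀ (r : F) (a b : P), bracket (r • a) b = r • bracket a b
  add_right : ∀ a b c : P, bracket a (b + c) = bracket a b + bracket a c
  smul_right : ∀ (r : F) (a b : P), bracket a (r • b) = r • bracket a b
  alt : ∀ a : P, bracket a a = 0
  jacobi : ∀ a b c : P,
    bracket (bracket a b) c + bracket (bracket b c) a + bracket (bracket c a) b = 0
  leibniz : ∀ a b c : P, bracket (a * b) c = a * bracket b c + b * bracket a c

namespace PoissonBracket

variable {F P : Type*} [Field F] [CommRing P] [Algebra F P]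

/-- `{A, B}`: the `F`-span of all brackets of elements of `A` with elements of `B`. -/
def lieSpan (pb : PoissonBracket F P) (A B : Submodule F P) : Submodule F P :=
  Submodule.span F {z : P | ∃ a ∈ A, ∃ b ∈ B, z = pb.bracket a b}

/-- Upper derived series: `δ̃₀(P) = P`, `δ̃ₙ₊₁(P) = {δ̃ₙ(P), δ̃ₙ(P)}·P`. -/
def udelta (pb : PoissonBracket F P) : ℕ → Submodule F P
  | 0 => ⊤
  | n + 1 => pb.lieSpan (pb.udelta n) (pb.udelta n) * ⊤

/-- Derived series of a Lie ideal `I`: `δ₀(I) = I`, `δₙ₊₁(I) = {δₙ(I), δₙ(I)}`. -/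
def dseries (pb : PoissonBracket F P) (I : Submodule F P) : ℕ → Submodule F P
  | 0 => I
  | n + 1 => pb.lieSpan (pb.dseries I n) (pb.dseries I n)

/-- Lower central series of a Lie ideal `I`, indexed so that `lcs I 1 = γ₁(I) = I`
and `lcs I (n+1) = γₙ₊₁(I) = {γₙ(I), I}` for `n ≥ 1` (index `0` is a dummy equal to `I`). -/
def lcs (pb : PoissonBracket F P) (I : Submodule F P) : ℕ → Submodule F P
  | 0 => I
  | 1 => I
  | n + 2 => pb.lieSpan (pb.lcs I (n + 1)) I

/-- Upper Lie power series: `P⁽¹⁾ = P`, `P⁽ⁿ⁾ = {P⁽ⁿ⁻¹⁾, P}·P` for `n > 1`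
(index `0` is a dummy equal to `P`). -/
def ulps (pb : PoissonBracket F P) : ℕ → Submodule F P
  | 0 => ⊤
  | 1 => ⊤
  | n + 2 => pb.lieSpan (pb.ulps (n + 1)) ⊤ * ⊤

/-- A Poisson ideal: an ideal for the associative product which is also a Lie ideal. -/
def IsPoissonIdeal (pb : PoissonBracket F P) (I : Submodule F P) : Prop :=
  (∀ x ∈ I, ∀ p : P, p * x ∈ I) ∧ (∀ x ∈ I, ∀ p : P, pb.bracket x p ∈ I)

/-- The Poisson ideal generated by a set `S`: the smallest Poisson ideal containing `S`. -/
def poissonSpan (pb : PoissonBracket F P) (S : Set P) : Submodule F P :=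
  sInf {I : Submodule F P | pb.IsPoissonIdeal I ∧ S ⊆ I}

end PoissonBracket

open PoissonBracket

/-!
If `K` is a Lie ideal whose derived ideal `L = {K, K}` is abelian, then for `u ∈ L` the
Hamiltonian derivation `{u, ·}` squares to zero. In a reduced algebra with `2` invertible a
derivation `D` with `D² = 0` vanishes, since `D²(x²) = 2 (D x)²`; so `L` is Poisson central.
Centrality then forces `{a, b}³ = 0` for `a, b ∈ K`, hence `L = 0`. Along the derived series
this pushes `δₙ(P) = 0` down to `δ₁(P) = {P, P} = 0`.
-/

theorem Derivation.eq_zero_of_apply_apply_eq_zero {R A : Type*} [CommRing R] [CommRing A]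
    [Algebra R A] [IsReduced A] (h2 : IsUnit (2 : A)) (D : Derivation R A A)
    (hD : ∀ x, D (D x) = 0) (x : A) : D x = 0 := by
  have hsq : D (D (x * x)) = 2 * D x ^ 2 := by
    rw [D.leibniz, map_add, smul_eq_mul, D.leibniz, hD, smul_eq_mul, smul_eq_mul]
    ring
  rw [hD, eq_comm, h2.mul_right_eq_zero] at hsq
  exact eq_zero_of_pow_eq_zero hsq

namespace PoissonBracket

variable {F P : Type*} [Field F] [CommRing P] [Algebra F P] (pb : PoissonBracket F P)

theorem bracket_swap (a b : P) : pb.bracket a b = -pb.bracket b a := by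
  have h := pb.alt (a + b)
  rw [pb.add_left, pb.add_right, pb.add_right, pb.alt, pb.alt] at h
  linear_combination h

theorem bracket_zero_left (x : P) : pb.bracket 0 x = 0 := by
  simpa using pb.smul_left 0 0 x

theorem bracket_mul_right (c a b : P) :
    pb.bracket c (a * b) = a * pb.bracket c b + b * pb.bracket c a := by
  rw [bracket_swap pb c, pb.leibniz, bracket_swap pb b, bracket_swap pb a]
  ring

def hamiltonian (u : P) : Derivation F P P :=
  Derivation.mk' ⟨⟨pb.bracket u, pb.add_right u⟩, fun r x => pb.smul_right r u x⟩
    (pb.bracket_mul_right u)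

@[simp]
theorem hamiltonian_apply (u x : P) : pb.hamiltonian u x = pb.bracket u x := rfl

theorem bracket_self_mul_right (b z : P) : pb.bracket b (b * z) = b * pb.bracket b z := by
  rw [bracket_mul_right, pb.alt, mul_zero, add_zero]

theorem bracket_neg_right (a b : P) : pb.bracket a (-b) = -pb.bracket a b := by
  rw [← hamiltonian_apply, map_neg, hamiltonian_apply]

theorem lieSpan_eq_bot_iff {A B : Submodule F P} :
    pb.lieSpan A B = ⊥ ↔ ∀ a ∈ A, ∀ b ∈ B, pb.bracket a b = 0 := by
  simp only [lieSpan, Submodule.span_eq_bot, Set.mem_ofPred_eq]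
  exact ⟨fun h a ha b hb => h _ ⟨a, ha, b, hb, rfl⟩,
    fun h _ ⟨a, ha, b, hb, hz⟩ => hz ▸ h a ha b hb⟩

def IsLieIdeal (K : Submodule F P) : Prop :=
  ∀ a ∈ K, ∀ x : P, pb.bracket a x ∈ K

/-- `u` lies in the Poisson centre. -/
def IsCasimir (u : P) : Prop :=
  ∀ x : P, pb.bracket x u = 0

variable {pb}

theorem IsLieIdeal.lieSpan_self {K : Submodule F P} (hK : pb.IsLieIdeal K) :
    pb.IsLieIdeal (pb.lieSpan K K) := by
  intro u hu
  induction hu using Submodule.span_induction with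
  | mem z hz =>
    obtain ⟨a, ha, b, hb, rfl⟩ := hz
    intro x
    have hjacobi : pb.bracket (pb.bracket a b) x
        = -pb.bracket (pb.bracket b x) a - pb.bracket (pb.bracket x a) b := by
      linear_combination pb.jacobi a b x
    have hxa : pb.bracket x a ∈ K := by
      rw [bracket_swap]; exact K.neg_mem (hK a ha x)
    rw [hjacobi]
    exact sub_mem (neg_mem (Submodule.subset_span ⟨_, hK b hb x, a, ha, rfl⟩))
      (Submodule.subset_span ⟨_, hxa, b, hb, rfl⟩)
  | zero => intro x; rw [bracket_zero_left]; exact zero_mem _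
  | add u v _ _ hu hv => intro x; rw [pb.add_left]; exact add_mem (hu x) (hv x)
  | smul r u _ hu => intro x; rw [pb.smul_left]; exact Submodule.smul_mem _ _ (hu x)

theorem isLieIdeal_dseries_top (n : ℕ) : pb.IsLieIdeal (pb.dseries ⊤ n) := by
  induction n with
  | zero => exact fun _ _ _ => Submodule.mem_top
  | succ n ih => exact ih.lieSpan_self

theorem bracket_eq_zero_of_isCasimir [IsReduced P] (h2 : IsUnit (2 : P)) {a b : P}
    (hab : pb.IsCasimir (pb.bracket a b))
    (habz : ∀ z, pb.IsCasimir (pb.bracket a (pb.bracket b z))) :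
    pb.bracket a b = 0 := by
  set c := pb.bracket a b
  -- apply `{a, {a, {b, ·}}} = 0` to `b * z`
  have hc : ∀ z, c * pb.bracket a (pb.bracket b z) = 0 := by
    intro z
    have h := habz (b * z) a
    rw [bracket_self_mul_right, bracket_mul_right, pb.add_right, bracket_mul_right,
      bracket_mul_right, habz z a, hab a] at h
    rw [← h2.mul_right_eq_zero]
    linear_combination h
  have hcube : c ^ 3 = 0 := by
    have h := hc (a * b)
    rw [mul_comm a b, bracket_self_mul_right, bracket_swap pb b a, mul_neg,
      bracket_neg_right, bracket_mul_right, hab a] at h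
    linear_combination -h
  exact eq_zero_of_pow_eq_zero hcube

theorem lieSpan_self_eq_bot_of_isLieIdeal [IsReduced P] (h2 : IsUnit (2 : P))
    {K : Submodule F P} (hK : pb.IsLieIdeal K)
    (hL : pb.lieSpan (pb.lieSpan K K) (pb.lieSpan K K) = ⊥) :
    pb.lieSpan K K = ⊥ := by
  have hmem : ∀ a ∈ K, ∀ b ∈ K, pb.bracket a b ∈ pb.lieSpan K K :=
    fun a ha b hb => Submodule.subset_span ⟨a, ha, b, hb, rfl⟩
  have hcentral : ∀ u ∈ pb.lieSpan K K, pb.IsCasimir u := by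
    intro u hu x
    have hsq : ∀ y, pb.hamiltonian u (pb.hamiltonian u y) = 0 :=
      fun y => (lieSpan_eq_bot_iff pb).1 hL u hu _ (hK.lieSpan_self u hu y)
    rw [bracket_swap, ← hamiltonian_apply,
      (pb.hamiltonian u).eq_zero_of_apply_apply_eq_zero h2 hsq, neg_zero]
  refine (lieSpan_eq_bot_iff pb).2 fun a ha b hb => bracket_eq_zero_of_isCasimir h2 ?_ ?_
  · exact hcentral _ (hmem a ha b hb)
  · exact fun z => hcentral _ (hmem a ha _ (hK b hb z))

theorem dseries_top_one_eq_bot [IsReduced P] (h2 : IsUnit (2 : P)) {n : ℕ}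
    (hn : pb.dseries ⊤ n = ⊥) : pb.dseries ⊤ 1 = ⊥ := by
  induction n with
  | zero => exact eq_bot_iff.2 fun x _ => hn ▸ (Submodule.mem_top : x ∈ pb.dseries ⊤ 0)
  | succ n ih =>
    cases n with
    | zero => exact hn
    | succ n => exact ih (lieSpan_self_eq_bot_of_isLieIdeal h2 (isLieIdeal_dseries_top n) hn)

end PoissonBracket

/-- Over a field of characteristic `≠ 2`, a reduced Poisson algebra is solvable
as a Lie algebra iff it is abelian. -/
theorem reduced_solvable_iff_abelian
    {F P : Type*} [Field F] [CommRing P] [Algebra F P] [IsReduced P]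
    (p : ℕ) [CharP F p] (hp : p ≠ 2)
    (pb : PoissonBracket F P) :
    (∃ n : ℕ, pb.dseries ⊤ n = ⊥) ↔ ∀ x y : P, pb.bracket x y = 0 := by
  have h2F : (2 : F) ≠ 0 := Ring.two_ne_zero (ringChar.eq F p ▸ hp)
  have h2 : IsUnit (2 : P) := by
    have h := h2F.isUnit.map (algebraMap F P)
    rwa [map_ofNat] at h
  constructor
  · rintro ⟨n, hn⟩ x y
    exact (lieSpan_eq_bot_iff pb).1 (dseries_top_one_eq_bot h2 hn) x trivial y trivial
  · exact fun h => ⟨1, (lieSpan_eq_bot_iff pb).2 fun a _ b _ => h a b⟩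
end

section
/- Let P be a Poisson algebra over a field 𝔽 and let A, B, C be Lie ideals of P such that {P, B} ⊆ A. Then {P, C}·{A, B} ⊆ {A, C}·P; that is, for all x₁ ∈ P, x₂ ∈ A, x₃ ∈ B, x₄ ∈ C, the product {x₁,x₄}·{x₂,x₃} lies in the span of products of elements of {A,C} with elements of P. -/
open PoissonBracket

/-!
Expanding `{{x₁x₂, x₃}, x₄}` by the Leibniz rule twice writes `{x₁,x₄}{x₂,x₃}` as a combination of
products `{a, x₄}·p` with `a` among `{x₁x₂, x₃}`, `{x₂, x₃}`, `{x₁, x₃}`, `x₂`, all of which lie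
in `A` since `A` is a Lie ideal and `{P, B} ⊆ A`.
-/

namespace PoissonBracket

variable {F P : Type*} [Field F] [CommRing P] [Algebra F P] (pb : PoissonBracket F P)

theorem bracket_bracket_mul_left (a b c d : P) :
    pb.bracket (pb.bracket (a * b) c) d =
      a * pb.bracket (pb.bracket b c) d + pb.bracket b c * pb.bracket a d +
        b * pb.bracket (pb.bracket a c) d + pb.bracket a c * pb.bracket b d := by
  rw [pb.leibniz, pb.add_left, pb.leibniz, pb.leibniz]
  ring

theorem bracket_mem_lieSpan {A B : Submodule F P} {a b : P} (ha : a ∈ A) (hb : b ∈ B) :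
    pb.bracket a b ∈ pb.lieSpan A B :=
  Submodule.subset_span ⟨a, ha, b, hb, rfl⟩

end PoissonBracket

theorem bracket_PC_mul_bracket_AB_mem_general
    {F P : Type*} [Field F] [CommRing P] [Algebra F P]
    (pb : PoissonBracket F P) (A B C : Submodule F P)
    (hA : ∀ x ∈ A, ∀ p : P, pb.bracket x p ∈ A)
    (hBA : ∀ x ∈ B, ∀ p : P, pb.bracket p x ∈ A) :
    ∀ x1 : P, ∀ x2 ∈ A, ∀ x3 ∈ B, ∀ x4 ∈ C,
      pb.bracket x1 x4 * pb.bracket x2 x3 ∈ pb.lieSpan A C * ⊤ := by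
  intro x1 x2 hx2 x3 hx3 x4 hx4
  have bracket_x4_mul_mem : ∀ a ∈ A, ∀ p : P, pb.bracket a x4 * p ∈ pb.lieSpan A C * ⊤ :=
    fun a ha p => Submodule.mul_mem_mul (pb.bracket_mem_lieSpan ha hx4) Submodule.mem_top
  have expansion : pb.bracket x1 x4 * pb.bracket x2 x3 =
      pb.bracket (pb.bracket (x1 * x2) x3) x4 * 1 - pb.bracket (pb.bracket x2 x3) x4 * x1 -
        pb.bracket (pb.bracket x1 x3) x4 * x2 - pb.bracket x2 x4 * pb.bracket x1 x3 := by
    linear_combination -pb.bracket_bracket_mul_left x1 x2 x3 x4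
  rw [expansion]
  exact sub_mem (sub_mem (sub_mem (bracket_x4_mul_mem _ (hBA x3 hx3 _) 1)
    (bracket_x4_mul_mem _ (hA x2 hx2 x3) x1)) (bracket_x4_mul_mem _ (hBA x3 hx3 x1) x2))
    (bracket_x4_mul_mem _ hx2 _)

/-- Let `A, B, C` be Lie ideals of `P` with `{P, B} ⊆ A`. Then `{P,C}·{A,B} ⊆ {A,C}·P`:
for `x₁ ∈ P`, `x₂ ∈ A`, `x₃ ∈ B`, `x₄ ∈ C`, the product `{x₁,x₄}·{x₂,x₃}` lies in
`{A,C}·P`. -/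
theorem bracket_PC_mul_bracket_AB_mem
    {F P : Type*} [Field F] [CommRing P] [Algebra F P]
    (pb : PoissonBracket F P) (A B C : Submodule F P)
    (hA : ∀ x ∈ A, ∀ p : P, pb.bracket x p ∈ A)
    (hB : ∀ x ∈ B, ∀ p : P, pb.bracket x p ∈ B)
    (hC : ∀ x ∈ C, ∀ p : P, pb.bracket x p ∈ C)
    (hBA : ∀ x ∈ B, ∀ p : P, pb.bracket p x ∈ A) :
    ∀ x1 : P, ∀ x2 ∈ A, ∀ x3 ∈ B, ∀ x4 ∈ C,
      pb.bracket x1 x4 * pb.bracket x2 x3 ∈ pb.lieSpan A C * ⊤ :=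
  bracket_PC_mul_bracket_AB_mem_general pb A B C hA hBA
end
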